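/- arXiv:2102.07024 — 2 statements merged into one kernel-verified Lean document; each statement's English description precedes it below -/
import Mathlib

section
/- Define Pₙ(d|s) = Σ_{a∈A} P⋆(d|[s,a])·Pₙ(a|s) and let Pₙ₊₁(a|s) be the updated marginal Pₙ₊₁(a|s) = Σ_d P⋆(d|[s,a])·Pₙ(a|s)·P⋆(d|s)/Pₙ(d|s). Then for every start state s, KL(P⋆(·|s) ‖ Pₙ₊₁(·|s)) − KL(P⋆(·|s) ‖ Pₙ(·|s)) ≤ −KL(P⋆(d|s) ‖ Pₙ(d|s)), where P⋆(d|s) = Σ_a P⋆(d|[s,a])·P⋆(a|s). -/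
open Finset

/-- Kullback–Leibler divergence between distributions on a finite set. -/
noncomputable def klDiv {X : Type*} [Fintype X] (p q : X → ℝ) : ℝ :=
  ∑ x, p x * Real.log (p x / q x)

theorem stmt_3 {S A D : Type*} [Fintype A] [Fintype D]
    (PT : S → A → D → ℝ)
    (hPT_nn : ∀ s a d, 0 ≤ PT s a d) (hPT_sum : ∀ s a, ∑ d, PT s a d = 1)
    (Pstar : S → A → ℝ)
    (hPstar_nn : ∀ s a, 0 ≤ Pstar s a) (hPstar_sum : ∀ s, ∑ a, Pstar s a = 1)
    (Pn : S → A → ℝ)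
    (hPn_pos : ∀ s a, 0 < Pn s a) (hPn_sum : ∀ s, ∑ a, Pn s a = 1)
    (PstarD : S → D → ℝ)
    (hPstarD : ∀ s d, PstarD s d = ∑ a, PT s a d * Pstar s a)
    (PnD : S → D → ℝ)
    (hPnD : ∀ s d, PnD s d = ∑ a, PT s a d * Pn s a)
    (Pnext : S → A → ℝ)
    (hPnext : ∀ s a,
      Pnext s a = ∑ d, PT s a d * Pn s a * PstarD s d / PnD s d) :
    ∀ s : S,
      klDiv (Pstar s) (Pnext s) - klDiv (Pstar s) (Pn s)
        ≤ - klDiv (PstarD s) (PnD s) := by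
  intro s
  have hPnD_nn : ∀ d, 0 ≤ PnD s d := fun d => by
    rw [hPnD]
    exact Finset.sum_nonneg fun a _ => mul_nonneg (hPT_nn s a d) (hPn_pos s a).le
  have hPsD_nn : ∀ d, 0 ≤ PstarD s d := fun d => by
    rw [hPstarD]
    exact Finset.sum_nonneg fun a _ => mul_nonneg (hPT_nn s a d) (hPstar_nn s a)
  have hPnD_pos : ∀ a d, 0 < PT s a d → 0 < PnD s d := fun a d h => by
    rw [hPnD]
    exact Finset.sum_pos' (fun b _ => mul_nonneg (hPT_nn s b d) (hPn_pos s b).le)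
      ⟨a, Finset.mem_univ a, mul_pos h (hPn_pos s a)⟩
  have hPsD_pos : ∀ a d, 0 < PT s a d → 0 < Pstar s a → 0 < PstarD s d := fun a d h ha => by
    rw [hPstarD]
    exact Finset.sum_pos' (fun b _ => mul_nonneg (hPT_nn s b d) (hPstar_nn s b))
      ⟨a, Finset.mem_univ a, mul_pos h ha⟩
  have hexd : ∀ a, ∃ d, 0 < PT s a d := by
    intro a
    obtain ⟨d, _, hd⟩ := Finset.exists_ne_zero_of_sum_ne_zero
      (by rw [hPT_sum s a]; norm_num : ∑ d, PT s a d ≠ 0)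
    exact ⟨d, lt_of_le_of_ne (hPT_nn s a d) (Ne.symm hd)⟩
  have hPnext_pos : ∀ a, 0 < Pstar s a → 0 < Pnext s a := by
    intro a ha
    obtain ⟨d, hd⟩ := hexd a
    rw [hPnext]
    refine Finset.sum_pos' (fun e _ => div_nonneg ?_ (hPnD_nn e)) ⟨d, Finset.mem_univ d, ?_⟩
    · exact mul_nonneg (mul_nonneg (hPT_nn s a e) (hPn_pos s a).le) (hPsD_nn e)
    · exact div_pos (mul_pos (mul_pos hd (hPn_pos s a)) (hPsD_pos a d hd ha)) (hPnD_pos a d hd)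
  have hPnextPn : ∀ a, ∑ d, PT s a d * (PstarD s d / PnD s d) = Pnext s a / Pn s a := by
    intro a
    rw [hPnext, Finset.sum_div]
    refine Finset.sum_congr rfl fun d _ => ?_
    by_cases h : PnD s d = 0
    · simp [h]
    · have hpn := (hPn_pos s a).ne'
      field_simp
  -- Jensen's inequality for log
  have key : ∀ a, 0 < Pstar s a →
      ∑ d, PT s a d * Real.log (PstarD s d / PnD s d)
        ≤ Real.log (∑ d, PT s a d * (PstarD s d / PnD s d)) := by
    intro a ha
    set t := Finset.univ.filter (fun d => 0 < PT s a d) with ht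
    have hzero : ∀ d, d ∉ t → PT s a d = 0 := by
      intro d hd
      have : ¬ 0 < PT s a d := by simpa [ht] using hd
      exact le_antisymm (not_lt.mp this) (hPT_nn s a d)
    have hsum1 : ∑ d ∈ t, PT s a d = 1 := by
      rw [← hPT_sum s a]
      exact Finset.sum_subset (Finset.filter_subset _ _)
        (fun d _ hd => hzero d hd)
    have hJ := (strictConcaveOn_log_Ioi.concaveOn).le_map_sum
      (t := t) (w := fun d => PT s a d) (p := fun d => PstarD s d / PnD s d)
      (fun d hd => hPT_nn s a d) hsum1
      (fun d hd => by
        have hdpos : 0 < PT s a d := (Finset.mem_filter.mp hd).2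
        exact Set.mem_Ioi.mpr (div_pos (hPsD_pos a d hdpos ha) (hPnD_pos a d hdpos)))
    simp only [smul_eq_mul] at hJ
    calc ∑ d, PT s a d * Real.log (PstarD s d / PnD s d)
        = ∑ d ∈ t, PT s a d * Real.log (PstarD s d / PnD s d) :=
          (Finset.sum_subset (Finset.filter_subset _ _)
            (fun d _ hd => by rw [hzero d hd, zero_mul])).symm
      _ ≤ Real.log (∑ d ∈ t, PT s a d * (PstarD s d / PnD s d)) := hJ
      _ = Real.log (∑ d, PT s a d * (PstarD s d / PnD s d)) := by
          congr 1
          exact Finset.sum_subset (Finset.filter_subset _ _)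
            (fun d _ hd => by rw [hzero d hd, zero_mul])
  have swap : ∑ a, Pstar s a * ∑ d, PT s a d * Real.log (PstarD s d / PnD s d)
      = klDiv (PstarD s) (PnD s) := by
    unfold klDiv
    simp_rw [Finset.mul_sum]
    rw [Finset.sum_comm]
    refine Finset.sum_congr rfl fun d _ => ?_
    rw [hPstarD, Finset.sum_mul]
    exact Finset.sum_congr rfl fun a _ => by ring
  have main : ∀ a, Pstar s a * Real.log (Pstar s a / Pnext s a)
      - Pstar s a * Real.log (Pstar s a / Pn s a)
      ≤ -(Pstar s a * ∑ d, PT s a d * Real.log (PstarD s d / PnD s d)) := by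
    intro a
    rcases eq_or_lt_of_le (hPstar_nn s a) with h | ha
    · simp [← h]
    · have hna := hPnext_pos a ha
      have h1 : ∑ d, PT s a d * Real.log (PstarD s d / PnD s d)
          ≤ Real.log (Pnext s a) - Real.log (Pn s a) := by
        have h2 := key a ha
        rw [hPnextPn a, Real.log_div hna.ne' (hPn_pos s a).ne'] at h2
        exact h2
      rw [Real.log_div ha.ne' hna.ne', Real.log_div ha.ne' (hPn_pos s a).ne']
      nlinarith [mul_le_mul_of_nonneg_left h1 ha.le]
  calc klDiv (Pstar s) (Pnext s) - klDiv (Pstar s) (Pn s)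
      = ∑ a, (Pstar s a * Real.log (Pstar s a / Pnext s a)
          - Pstar s a * Real.log (Pstar s a / Pn s a)) := by
        unfold klDiv; rw [← Finset.sum_sub_distrib]
    _ ≤ ∑ a, -(Pstar s a * ∑ d, PT s a d * Real.log (PstarD s d / PnD s d)) :=
        Finset.sum_le_sum fun a _ => main a
    _ = - klDiv (PstarD s) (PnD s) := by
        rw [Finset.sum_neg_distrib, swap]
end

section
/- Fix a start state s and a description d with P⋆(d|s) > 0. Define the operator (WP)(a|s,d) = P⋆(d|[s,a])·P(a|s) / Σ_{a'} P⋆(d|[s,a'])·P(a'|s), where P(a|s) = Σ_{d'} P⋆(d'|s)·P(a|s,d'). Then ‖(WP)(·|s,d) − (WP⋆)(·|s,d)‖₁ ≤ (2/P⋆(d|s))·‖P(·|s) − P⋆(·|s)‖₁. -/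
open Finset

theorem stmt_8 {A D : Type*} [Fintype A] [Fintype D]
    (PT : A → D → ℝ)
    (hPT_nn : ∀ a d, 0 ≤ PT a d) (hPT_sum : ∀ a, ∑ d, PT a d = 1)
    (PstarA : A → ℝ)
    (hPstarA_nn : ∀ a, 0 ≤ PstarA a) (hPstarA_sum : ∑ a, PstarA a = 1)
    (PstarD : D → ℝ)
    (hPstarD : ∀ d, PstarD d = ∑ a, PT a d * PstarA a)
    (Ppol : D → A → ℝ)
    (hPpol_nn : ∀ d a, 0 ≤ Ppol d a) (hPpol_sum : ∀ d, ∑ a, Ppol d a = 1)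
    (Pm : A → ℝ) (hPm : ∀ a, Pm a = ∑ d', PstarD d' * Ppol d' a)
    (d : D) (hd : 0 < PstarD d)
    (hPd : 0 < ∑ a, PT a d * Pm a) :
    ∑ a, |PT a d * Pm a / (∑ a', PT a' d * Pm a')
            - PT a d * PstarA a / PstarD d|
      ≤ (2 / PstarD d) * ∑ a, |Pm a - PstarA a| := by
  set q : A → ℝ := fun a => PT a d * Pm a with hq
  set r : A → ℝ := fun a => PT a d * PstarA a with hr
  set Z : ℝ := ∑ a, q a with hZ
  set W : ℝ := PstarD d with hW
  have hWsum : W = ∑ a, r a := hPstarD d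
  have hq_nn : ∀ a, 0 ≤ q a := fun a => by
    apply mul_nonneg (hPT_nn a d)
    rw [hPm]
    exact Finset.sum_nonneg fun d' _ => mul_nonneg (by
      rw [hPstarD]
      exact Finset.sum_nonneg fun a' _ => mul_nonneg (hPT_nn a' d') (hPstarA_nn a')) (hPpol_nn d' a)
  have hPT_le : ∀ a, PT a d ≤ 1 := by
    intro a
    calc PT a d ≤ ∑ d', PT a d' :=
          Finset.single_le_sum (fun d' _ => hPT_nn a d') (Finset.mem_univ d)
      _ = 1 := hPT_sum a
  set S : ℝ := ∑ a, |q a - r a| with hS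
  have hZW : |Z - W| ≤ S := by
    rw [hZ, hWsum, ← Finset.sum_sub_distrib]
    exact Finset.abs_sum_le_sum_abs _ _
  have key : ∀ a, |q a / Z - r a / W| ≤ q a * |1/Z - 1/W| + |q a - r a| / W := by
    intro a
    have : q a / Z - r a / W = q a * (1/Z - 1/W) + (q a - r a) / W := by
      field_simp
      ring
    rw [this]
    calc |q a * (1/Z - 1/W) + (q a - r a) / W|
        ≤ |q a * (1/Z - 1/W)| + |(q a - r a) / W| := abs_add_le _ _
      _ = q a * |1/Z - 1/W| + |q a - r a| / W := by
          rw [abs_mul, abs_div, abs_of_nonneg (hq_nn a), abs_of_pos hd]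
  have step1 : ∑ a, |q a / Z - r a / W| ≤ Z * |1/Z - 1/W| + S / W := by
    calc ∑ a, |q a / Z - r a / W|
        ≤ ∑ a, (q a * |1/Z - 1/W| + |q a - r a| / W) :=
          Finset.sum_le_sum fun a _ => key a
      _ = Z * |1/Z - 1/W| + S / W := by
          rw [Finset.sum_add_distrib, ← Finset.sum_mul, ← Finset.sum_div]
  have step2 : Z * |1/Z - 1/W| ≤ S / W := by
    have : 1/Z - 1/W = (W - Z) / (Z * W) := by field_simp
    rw [this, abs_div, abs_of_pos (mul_pos hPd hd)]
    rw [mul_div_assoc']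
    rw [div_le_div_iff₀ (mul_pos hPd hd) hd]
    have h1 : |W - Z| ≤ S := by rw [abs_sub_comm]; exact hZW
    calc Z * |W - Z| * W ≤ Z * S * W := by
          apply mul_le_mul_of_nonneg_right _ hd.le
          exact mul_le_mul_of_nonneg_left h1 hPd.le
      _ = S * (Z * W) := by ring
  have hSle : S ≤ ∑ a, |Pm a - PstarA a| := by
    apply Finset.sum_le_sum
    intro a _
    have : q a - r a = PT a d * (Pm a - PstarA a) := by rw [hq, hr]; ring
    rw [this, abs_mul, abs_of_nonneg (hPT_nn a d)]
    calc PT a d * |Pm a - PstarA a| ≤ 1 * |Pm a - PstarA a| :=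
          mul_le_mul_of_nonneg_right (hPT_le a) (abs_nonneg _)
      _ = |Pm a - PstarA a| := one_mul _
  calc ∑ a, |q a / Z - r a / W| ≤ Z * |1/Z - 1/W| + S / W := step1
    _ ≤ S / W + S / W := by linarith [step2]
    _ = (2 / W) * S := by ring
    _ ≤ (2 / W) * ∑ a, |Pm a - PstarA a| := by
        apply mul_le_mul_of_nonneg_left hSle
        positivity
end
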